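/- arXiv:1202.3587 — 2 statements merged into one kernel-verified Lean document; each statement's English description precedes it below -/
import Mathlib

section
/- Let A be a nonnegative m×n real matrix with m = n, and suppose column k of A contains exactly two nonzero entries a_{ik} and a_{jk} with i ≠ j. Let B be the (n-1)×(n-1) matrix obtained from A by replacing row i with a_{jk}·(row i) + a_{ik}·(row j), deleting row j, and deleting column k. Then per A = per B. -/
/-!
Expanding `per A` along column `k` leaves only the two terms `a_ik · per A_ik + a_jk · per A_jk`,
where `A_lk` deletes row `l` and column `k`. On the other side, the permanent is linear in the
contracted row, so `per B = a_jk · per A_jk + a_ik · per C`, where `C` is `A_jk` with the row coming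
from `i` replaced by row `j` of `A`. The rows of `C` are those of `A_ik` in another order, hence
`per C = per A_ik`.
-/

def permanent {n : ℕ} (A : Matrix (Fin n) (Fin n) ℝ) : ℝ :=
  ∑ σ : Equiv.Perm (Fin n), ∏ i, A i (σ i)

open Equiv Finset Function

theorem Fin.succAbove_finSuccAboveEquiv_symm {n : ℕ} (k : Fin (n + 1)) (y : {x // x ≠ k}) :
    k.succAbove ((finSuccAboveEquiv k).symm y) = y := by
  simpa only [finSuccAboveEquiv_apply] using
    congrArg Subtype.val ((finSuccAboveEquiv k).apply_symm_apply y)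

def Equiv.Perm.subtypeApplyEqEquiv {n : ℕ} (i k : Fin (n + 1)) :
    {σ : Perm (Fin (n + 1)) // σ i = k} ≃ Perm (Fin n) :=
  ((finSuccEquiv' i).equivCongr (Equiv.refl _)).subtypeEquiv (fun σ => by simp) |>.trans <|
    (optionSubtype k).trans ((Equiv.refl _).equivCongr (finSuccAboveEquiv k).symm)

theorem Equiv.Perm.succAbove_subtypeApplyEqEquiv {n : ℕ} (i k : Fin (n + 1))
    (σ : {σ : Perm (Fin (n + 1)) // σ i = k}) (p : Fin n) :
    k.succAbove (subtypeApplyEqEquiv i k σ p) = σ.1 (i.succAbove p) := by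
  simp only [subtypeApplyEqEquiv, trans_apply, equivCongr_apply_apply, refl_symm, refl_apply,
    Fin.succAbove_finSuccAboveEquiv_symm, coe_optionSubtype_apply_apply]
  exact congrArg σ.1 (finSuccEquiv'_symm_some i p)

namespace Matrix

theorem submatrix_updateRow_of_injective {l m o p α : Type*} [DecidableEq l] [DecidableEq m]
    {f : l → m} (hf : Injective f) (A : Matrix m o α) (a : l) (r : o → α) (g : p → o) :
    (A.updateRow (f a) r).submatrix f g = (A.submatrix f g).updateRow a (r ∘ g) := by
  ext b c
  by_cases h : b = a <;> simp [updateRow_apply, hf.eq_iff, h]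

variable {m o R : Type*} [CommSemiring R]

section Linearity

variable [Fintype m] [DecidableEq m]

theorem permanent_updateCol_add (M : Matrix m m R) (j : m) (u v : m → R) :
    (M.updateCol j (u + v)).permanent =
      (M.updateCol j u).permanent + (M.updateCol j v).permanent := by
  simp only [permanent, ← mul_prod_erase _ _ (mem_univ j), updateCol_self, Pi.add_apply, add_mul,
    sum_add_distrib]
  congr 1 <;> refine sum_congr rfl fun σ _ => congrArg _ (prod_congr rfl fun x hx => ?_) <;>
    simp [updateCol_ne (ne_of_mem_erase hx)]

theorem permanent_updateRow_add (M : Matrix m m R) (j : m) (u v : m → R) :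
    (M.updateRow j (u + v)).permanent =
      (M.updateRow j u).permanent + (M.updateRow j v).permanent := by
  simp only [← permanent_transpose (updateRow _ _ _), ← updateCol_transpose,
    permanent_updateCol_add]

end Linearity

theorem permanent_submatrix_eq_of_range_eq {l : Type*} [Fintype m] [DecidableEq m] {f f' : m → l}
    (hf : Injective f) (hf' : Injective f') (h : Set.range f = Set.range f') (A : Matrix l o R)
    (g : m → o) : (A.submatrix f g).permanent = (A.submatrix f' g).permanent := by
  let π : Perm m := (ofInjective f hf).trans ((setCongr h).trans (ofInjective f' hf').symm)
  have hπ : f' ∘ π = f := funext fun x => by simp [π, apply_ofInjective_symm]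
  rw [← hπ, ← permanent_permute_cols π (A.submatrix f' g)]
  rfl

variable {n : ℕ}

theorem permanent_succ_column (A : Matrix (Fin (n + 1)) (Fin (n + 1)) R) (k : Fin (n + 1)) :
    A.permanent = ∑ i, A i k * (A.submatrix i.succAbove k.succAbove).permanent := by
  simp only [permanent, mul_sum]
  rw [← (sigmaFiberEquiv fun σ : Perm (Fin (n + 1)) => σ k).sum_comp, Fintype.sum_sigma]
  refine Fintype.sum_congr _ _ fun i => Fintype.sum_equiv (Perm.subtypeApplyEqEquiv k i) _ _
    fun σ => ?_
  simp [Fin.prod_univ_succAbove _ k, Perm.succAbove_subtypeApplyEqEquiv, σ.2]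

theorem permanent_submatrix_succAbove_updateRow_self (A : Matrix (Fin (n + 1)) o R)
    (i j : Fin (n + 1)) (g : Fin n → o) :
    ((A.updateRow i (A j)).submatrix j.succAbove g).permanent =
      (A.submatrix i.succAbove g).permanent := by
  have hswap : (A.updateRow i (A j)).submatrix j.succAbove g =
      A.submatrix (Equiv.swap i j ∘ j.succAbove) g := by
    ext a b
    by_cases h : j.succAbove a = i
    · simp [h]
    · simp [updateRow_ne h, swap_apply_of_ne_of_ne h (Fin.succAbove_ne j a)]
  have hrange : Set.range (Equiv.swap i j ∘ j.succAbove) = Set.range i.succAbove := by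
    rw [Set.range_comp, Fin.range_succAbove, Fin.range_succAbove, Equiv.image_compl,
      Set.image_singleton, swap_apply_right]
  rw [hswap, permanent_submatrix_eq_of_range_eq
    ((Equiv.swap i j).injective.comp Fin.succAbove_right_injective) Fin.succAbove_right_injective
    hrange]

theorem permanent_submatrix_succAbove_updateRow_smul_add_smul (A : Matrix (Fin (n + 1)) o R)
    {i j : Fin (n + 1)} (hij : i ≠ j) (c d : R) (g : Fin n → o) :
    ((A.updateRow i (c • A i + d • A j)).submatrix j.succAbove g).permanent =
      c * (A.submatrix j.succAbove g).permanent + d * (A.submatrix i.succAbove g).permanent := by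
  obtain ⟨p, rfl⟩ := Fin.exists_succAbove_eq hij
  have hrow (r : o → R) : (A.updateRow (j.succAbove p) r).submatrix j.succAbove g =
      (A.submatrix j.succAbove g).updateRow p (r ∘ g) :=
    submatrix_updateRow_of_injective Fin.succAbove_right_injective A p r g
  have hcomb : (c • A (j.succAbove p) + d • A j) ∘ g =
      c • (A (j.succAbove p) ∘ g) + d • (A j ∘ g) :=
    rfl
  have hself : (A.submatrix j.succAbove g).updateRow p (A (j.succAbove p) ∘ g) =
      A.submatrix j.succAbove g :=
    updateRow_eq_self _ p
  rw [← permanent_submatrix_succAbove_updateRow_self A (j.succAbove p) j g, hrow, hrow, hcomb,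
    permanent_updateRow_add, permanent_updateRow_smul, permanent_updateRow_smul, hself]

end Matrix

theorem permanent_eq_matrix_permanent {n : ℕ} (A : Matrix (Fin n) (Fin n) ℝ) :
    permanent A = A.permanent :=
  Matrix.permanent_transpose A

theorem permanent_contraction_general (n : ℕ) (A : Matrix (Fin (n + 1)) (Fin (n + 1)) ℝ)
    (i j k : Fin (n + 1)) (hij : i ≠ j)
    (hzero : ∀ l, l ≠ i → l ≠ j → A l k = 0) :
    permanent A =
      permanent
        ((A.updateRow i (A j k • A i + A i k • A j)).submatrix j.succAbove k.succAbove) := by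
  rw [permanent_eq_matrix_permanent, permanent_eq_matrix_permanent,
    Matrix.permanent_submatrix_succAbove_updateRow_smul_add_smul A hij,
    Matrix.permanent_succ_column A k,
    Fintype.sum_eq_add i j hij fun l hl => by rw [hzero l hl.1 hl.2, zero_mul]]
  ring

theorem permanent_contraction (n : ℕ) (A : Matrix (Fin (n + 1)) (Fin (n + 1)) ℝ)
    (hA : ∀ p q, 0 ≤ A p q)
    (i j k : Fin (n + 1)) (hij : i ≠ j)
    (hi : A i k ≠ 0) (hj : A j k ≠ 0)
    (hzero : ∀ l, l ≠ i → l ≠ j → A l k = 0) :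
    permanent A =
      permanent
        ((A.updateRow i (A j k • A i + A i k • A j)).submatrix j.succAbove k.succAbove) :=
  permanent_contraction_general n A i j k hij hzero
end

section
/- Let A_n be the n×n tridiagonal matrix over ℂ with main diagonal all 1, subdiagonal all -1, and superdiagonal all 2. Then the eigenvalues of A_n are 1 + 2√2 i cos(kπ/(n+1)) for k = 1, ..., n, and consequently J_{n+1} = Π_{k=1}^n (1 + 2√2 i cos(kπ/(n+1))), where J is the Jacobsthal sequence. -/
open Complex Real

def jacobsthal : ℕ → ℤ
  | 0 => 0
  | 1 => 1
  | n + 2 => jacobsthal (n + 1) + 2 * jacobsthal n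

/-- Tridiagonal Toeplitz matrix over ℂ with diagonal 1, subdiagonal -1, superdiagonal 2. -/
def Amat (n : ℕ) : Matrix (Fin n) (Fin n) ℂ :=
  Matrix.of fun i j =>
    if (i : ℕ) = (j : ℕ) then 1
    else if (i : ℕ) = (j : ℕ) + 1 then -1
    else if (j : ℕ) = (i : ℕ) + 1 then 2
    else 0

/-!
The characteristic polynomials `p n` of the tridiagonal Toeplitz matrices with diagonal `d`,
subdiagonal `a` and superdiagonal `c` satisfy `p (n + 2) = (X - d) * p (n + 1) - a * c * p n`
(Laplace expansion along the first row). For `s ^ 2 = a * c` this is the recurrence of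
`s ^ n * U n ((X - d) / (2 * s))`, where `U` is the Chebyshev polynomial of the second kind, so the
`n` distinct zeros `cos (k * π / (n + 1))` of `U n` yield all `n` roots
`d + 2 * s * cos (k * π / (n + 1))` of `p n`: these form the spectrum, and their product is the
determinant. For `A_n` take `s = √2 * I`; the determinants `det A_n` satisfy the Jacobsthal
recurrence, so `det A_n = J (n + 1)`.
-/

open Polynomial Matrix

def tridiagToeplitz {R : Type*} [Zero R] (n : ℕ) (d a c : R) : Matrix (Fin n) (Fin n) R :=
  Matrix.of fun i j =>
    if (i : ℕ) = j then d
    else if (i : ℕ) = j + 1 then a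
    else if (j : ℕ) = i + 1 then c
    else 0

section tridiagToeplitz

variable {R : Type*} [CommRing R] (d a c : R)

theorem tridiagToeplitz_submatrix_succ (n : ℕ) :
    (tridiagToeplitz (n + 1) d a c).submatrix Fin.succ Fin.succ = tridiagToeplitz n d a c := by
  ext i j
  simp [tridiagToeplitz]

theorem det_tridiagToeplitz_add_two (n : ℕ) :
    (tridiagToeplitz (n + 2) d a c).det =
      d * (tridiagToeplitz (n + 1) d a c).det - a * c * (tridiagToeplitz n d a c).det := by
  have hcol : (Fin.succAbove 1 : Fin (n + 1) → Fin (n + 2)) ∘ Fin.succ = Fin.succ ∘ Fin.succ :=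
    funext fun j => by rw [← Fin.succ_zero_eq_one]; exact Fin.succ_succAbove_succ 0 j
  -- the `(0, 1)` minor has first column `(a, 0, …, 0)`
  have hminor : ((tridiagToeplitz (n + 2) d a c).submatrix Fin.succ (Fin.succAbove 1)).det =
      a * (tridiagToeplitz n d a c).det := by
    rw [det_succ_column_zero, Fin.sum_univ_succ, submatrix_submatrix,
      Fin.succAbove_zero, hcol, ← submatrix_submatrix, tridiagToeplitz_submatrix_succ,
      tridiagToeplitz_submatrix_succ]
    simp [tridiagToeplitz]
  rw [det_succ_row_zero, Fin.sum_univ_succ, Fin.sum_univ_succ]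
  simp only [Fin.succAbove_zero, tridiagToeplitz_submatrix_succ, Fin.succ_zero_eq_one, hminor]
  simp [tridiagToeplitz]
  ring

theorem charmatrix_tridiagToeplitz (n : ℕ) :
    charmatrix (tridiagToeplitz n d a c) = tridiagToeplitz n (X - C d) (-C a) (-C c) := by
  ext i j
  by_cases h : i = j
  · subst h
    simp [charmatrix_apply_eq, tridiagToeplitz]
  · simp [charmatrix_apply_ne _ _ _ h, tridiagToeplitz, Fin.val_ne_of_ne h]
    split_ifs <;> simp

theorem charpoly_tridiagToeplitz_add_two (n : ℕ) :
    (tridiagToeplitz (n + 2) d a c).charpoly =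
      (X - C d) * (tridiagToeplitz (n + 1) d a c).charpoly -
        C (a * c) * (tridiagToeplitz n d a c).charpoly := by
  simp only [Matrix.charpoly, charmatrix_tridiagToeplitz, det_tridiagToeplitz_add_two, C_mul]
  ring

theorem eval_charpoly_tridiagToeplitz {s : R} (hs : s ^ 2 = a * c) (y : R) (n : ℕ) :
    (tridiagToeplitz n d a c).charpoly.eval (d + 2 * s * y) = s ^ n * (Chebyshev.U R n).eval y := by
  induction n using Nat.twoStepInduction with
  | zero => simp
  | one =>
    simp [Matrix.charpoly, tridiagToeplitz]
    ring
  | more n ih₀ ih₁ =>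
    rw [charpoly_tridiagToeplitz_add_two, eval_sub, eval_mul, eval_mul, ih₀, ih₁]
    push_cast
    rw [Chebyshev.U_add_two]
    simp only [eval_sub, eval_mul, eval_X, eval_C, eval_ofNat, ← hs]
    ring

theorem det_tridiagToeplitz_eq_jacobsthal (n : ℕ) :
    (tridiagToeplitz n (1 : R) (-1) 2).det = jacobsthal (n + 1) := by
  induction n using Nat.twoStepInduction with
  | zero => simp [jacobsthal]
  | one => simp [tridiagToeplitz, jacobsthal]
  | more n ih₀ ih₁ =>
    rw [det_tridiagToeplitz_add_two, ih₀, ih₁]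
    simp only [jacobsthal]
    push_cast
    ring

end tridiagToeplitz

theorem Amat_eq_tridiagToeplitz (n : ℕ) : Amat n = tridiagToeplitz n 1 (-1) 2 := rfl

theorem injOn_cos_nat_mul_pi_div (n : ℕ) :
    Set.InjOn (fun k : ℕ => Real.cos (k * π / (n + 1))) (Finset.Icc 1 n) := by
  refine injOn_cos.comp (fun k _ l _ h => ?_) fun k hk => ?_
  · field_simp at h
    exact_mod_cast h
  · have hk : (k : ℝ) ≤ n + 1 := by
      norm_cast
      grind
    refine Set.mem_Icc.mpr ⟨by positivity, ?_⟩
    rw [div_le_iff₀ (by positivity)]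
    nlinarith [pi_pos]

theorem U_eval_cos_nat_mul_pi_div_eq_zero {n k : ℕ} (hk : k ∈ Finset.Icc 1 n) :
    (Chebyshev.U ℂ n).eval (Complex.cos (k * π / (n + 1))) = 0 := by
  obtain ⟨j, hj, rfl⟩ : ∃ j < n, k = j + 1 := ⟨k - 1, by grind⟩
  have hroot : Real.cos ((j + 1 : ℕ) * π / (n + 1)) ∈ (Chebyshev.U ℝ n).roots := by
    rw [Chebyshev.roots_U_real]
    simp only [Finset.mem_val, Finset.mem_image, Finset.mem_range]
    exact ⟨j, hj, by push_cast; ring⟩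
  exact_mod_cast (mem_roots'.mp hroot).2

theorem roots_charpoly_tridiagToeplitz {n : ℕ} {d a c s : ℂ} (hs : s ^ 2 = a * c) (hs0 : s ≠ 0) :
    (tridiagToeplitz n d a c).charpoly.roots =
      (Finset.Icc 1 n).val.map fun k : ℕ => d + 2 * s * Complex.cos (k * π / (n + 1)) := by
  have hinj : Set.InjOn (fun k : ℕ => d + 2 * s * Complex.cos (k * π / (n + 1)))
      (Finset.Icc 1 n) := by
    intro k hk l hl h
    apply injOn_cos_nat_mul_pi_div n hk hl
    apply Complex.ofReal_injective
    push_cast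
    simpa [hs0] using h
  rw [← Finset.image_val_of_injOn hinj]
  refine roots_eq_of_degree_eq_card (fun z hz => ?_) ?_
  · obtain ⟨k, hk, rfl⟩ := Finset.mem_image.mp hz
    rw [eval_charpoly_tridiagToeplitz d a c hs, U_eval_cos_nat_mul_pi_div_eq_zero hk, mul_zero]
  · rw [Finset.card_image_of_injOn hinj, Nat.card_Icc, charpoly_degree_eq_dim, Fintype.card_fin]
    simp

theorem spectrum_tridiagToeplitz {n : ℕ} {d a c s : ℂ} (hs : s ^ 2 = a * c) (hs0 : s ≠ 0) :
    spectrum ℂ (tridiagToeplitz n d a c) =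
      {z | ∃ k ∈ Finset.Icc 1 n, z = d + 2 * s * Complex.cos (k * π / (n + 1))} := by
  ext z
  rw [mem_spectrum_iff_isRoot_charpoly, ← mem_roots (charpoly_monic _).ne_zero,
    roots_charpoly_tridiagToeplitz hs hs0, Multiset.mem_map]
  simp [eq_comm]

theorem det_tridiagToeplitz_eq_prod {n : ℕ} {d a c s : ℂ} (hs : s ^ 2 = a * c) (hs0 : s ≠ 0) :
    (tridiagToeplitz n d a c).det =
      ∏ k ∈ Finset.Icc 1 n, (d + 2 * s * Complex.cos (k * π / (n + 1))) := by
  rw [det_eq_prod_roots_charpoly, roots_charpoly_tridiagToeplitz hs hs0, Finset.prod_map_val]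

theorem eigenvalues_Amat_and_jacobsthal_factorization (n : ℕ) :
    spectrum ℂ (Amat n) =
      {z : ℂ | ∃ k ∈ Finset.Icc 1 n,
        z = 1 + 2 * Real.sqrt 2 * Complex.I * Complex.cos (k * Real.pi / (n + 1))} ∧
    (jacobsthal (n + 1) : ℂ) =
      ∏ k ∈ Finset.Icc 1 n,
        (1 + 2 * Real.sqrt 2 * Complex.I * Complex.cos (k * Real.pi / (n + 1))) := by
  have hs : ((√2 : ℂ) * I) ^ 2 = -1 * 2 := by
    rw [mul_pow, I_sq, ← ofReal_pow, sq_sqrt zero_le_two]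
    push_cast
    ring
  have hs0 : (√2 : ℂ) * I ≠ 0 := by simp
  have heig (k : ℕ) : 1 + 2 * (√2 * I) * Complex.cos (k * π / (n + 1)) =
      1 + 2 * √2 * I * Complex.cos (k * π / (n + 1)) := by
    ring
  rw [Amat_eq_tridiagToeplitz, spectrum_tridiagToeplitz hs hs0,
    ← det_tridiagToeplitz_eq_jacobsthal, det_tridiagToeplitz_eq_prod hs hs0]
  simp only [heig, and_self]
end
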